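/- The function φ ↦ ρ(φ) + φ - 1, where ρ(φ) = aφ/(aφ+(1-b)(1-φ)), has exactly one root in (0,1) when a > 0 and 1-b > 0 and a ≠ 1-b, namely φ_e = √(1-b)/(√a+√(1-b)). -/

import Mathlib

/-!
Clearing the denominator `D = a φ + c (1 - φ)` turns `ρ(φ) + φ - 1 = 0` into `a φ = (1 - φ) D`,
i.e. `a φ² = c (1 - φ)²`. For `φ ∈ (0, 1)` both `√a φ` and `√c (1 - φ)` are nonnegative, so this
says `√a φ = √c (1 - φ)`, a linear equation whose only solution is `√c / (√a + √c)`.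
-/

open Real Set

variable {a c φ : ℝ}

lemma mul_add_mul_one_sub_pos (ha : 0 < a) (hc : 0 < c) (hφ : φ ∈ Ioo 0 1) :
    0 < a * φ + c * (1 - φ) :=
  add_pos (mul_pos ha hφ.1) (mul_pos hc (sub_pos.2 hφ.2))

lemma div_add_sub_one_eq_zero_iff (hD : a * φ + c * (1 - φ) ≠ 0) :
    a * φ / (a * φ + c * (1 - φ)) + φ - 1 = 0 ↔ a * φ ^ 2 = c * (1 - φ) ^ 2 := by
  rw [add_sub_assoc, div_add' _ _ _ hD, div_eq_zero_iff, or_iff_left hD]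
  constructor <;> intro h <;> linear_combination h

lemma mul_sq_eq_mul_sq_iff (ha : 0 < a) (hc : 0 ≤ c) (hφ : φ ∈ Icc 0 1) :
    a * φ ^ 2 = c * (1 - φ) ^ 2 ↔ φ = √c / (√a + √c) := by
  have hsum : 0 < √a + √c := add_pos_of_pos_of_nonneg (sqrt_pos.2 ha) (sqrt_nonneg c)
  have hsa : a * φ ^ 2 = (√a * φ) ^ 2 := by rw [mul_pow, sq_sqrt ha.le]
  have hsc : c * (1 - φ) ^ 2 = (√c * (1 - φ)) ^ 2 := by rw [mul_pow, sq_sqrt hc]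
  rw [hsa, hsc, sq_eq_sq₀ (mul_nonneg (sqrt_nonneg a) hφ.1)
    (mul_nonneg (sqrt_nonneg c) (sub_nonneg.2 hφ.2)), eq_div_iff hsum.ne']
  constructor <;> intro h <;> linear_combination h

lemma sqrt_div_sqrt_add_sqrt_mem_Ioo (ha : 0 < a) (hc : 0 < c) : √c / (√a + √c) ∈ Ioo 0 1 := by
  have hsa := sqrt_pos.2 ha
  have hsc := sqrt_pos.2 hc
  exact ⟨by positivity, (div_lt_one (by positivity)).2 (lt_add_of_pos_left _ hsa)⟩

lemma root_iff_eq (ha : 0 < a) (hc : 0 < c) (hφ : φ ∈ Ioo 0 1) :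
    a * φ / (a * φ + c * (1 - φ)) + φ - 1 = 0 ↔ φ = √c / (√a + √c) := by
  rw [div_add_sub_one_eq_zero_iff (mul_add_mul_one_sub_pos ha hc hφ).ne',
    mul_sq_eq_mul_sq_iff ha hc.le (Ioo_subset_Icc_self hφ)]

theorem stmt_9_general (a b : ℝ) (ha : 0 < a) (hb : b < 1)
    (φe : ℝ) (hφe : φe = Real.sqrt (1 - b) / (Real.sqrt a + Real.sqrt (1 - b))) :
    (φe ∈ Set.Ioo (0:ℝ) 1 ∧ a * φe / (a * φe + (1 - b) * (1 - φe)) + φe - 1 = 0) ∧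
      ∀ φ ∈ Set.Ioo (0:ℝ) 1,
        a * φ / (a * φ + (1 - b) * (1 - φ)) + φ - 1 = 0 → φ = φe := by
  have hc : 0 < 1 - b := sub_pos.2 hb
  have hmem : φe ∈ Ioo 0 1 := hφe ▸ sqrt_div_sqrt_add_sqrt_mem_Ioo ha hc
  refine ⟨⟨hmem, (root_iff_eq ha hc hmem).2 hφe⟩, fun φ hφ hroot => ?_⟩
  exact hφe ▸ (root_iff_eq ha hc hφ).1 hroot

theorem stmt_9 (a b : ℝ) (ha : 0 < a) (ha1 : a ≤ 1) (hb0 : 0 ≤ b) (hb : b < 1)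
    (hne : a ≠ 1 - b)
    (φe : ℝ) (hφe : φe = Real.sqrt (1 - b) / (Real.sqrt a + Real.sqrt (1 - b))) :
    (φe ∈ Set.Ioo (0:ℝ) 1 ∧ a * φe / (a * φe + (1 - b) * (1 - φe)) + φe - 1 = 0) ∧
      ∀ φ ∈ Set.Ioo (0:ℝ) 1,
        a * φ / (a * φ + (1 - b) * (1 - φ)) + φ - 1 = 0 → φ = φe :=
  stmt_9_general a b ha hb φe hφe
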